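/- Let H be a host graph with n nodes and k ≥ 1 terminals, and let s be a Nash Equilibrium for H in the global edge-buying setting. Then G(s) contains at most k·(n − 1) time edges, i.e., |Λ_{G(s)}| ≤ k·(n − 1); consequently SC_H(s) ≤ k·SC_H(s*_H), so the Price of Anarchy with respect to Nash Equilibria in the global setting is at most k. -/

import Mathlib

namespace TNCG

/-- A time edge: an undirected edge together with a time label. -/
abbrev TimeEdge (V : Type) := Sym2 V × ℕ

/-- A temporal host graph with terminals: the underlying graph is complete, every
(non-loop) edge carries a nonempty finite set of time labels, and there is a
nonempty set of terminal nodes. -/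
structure HostGraph (V : Type) [Fintype V] [DecidableEq V] where
  labels : Sym2 V → Finset ℕ
  labels_nonempty : ∀ e : Sym2 V, ¬ e.IsDiag → (labels e).Nonempty
  labels_diag : ∀ e : Sym2 V, e.IsDiag → labels e = ∅
  terminals : Finset V
  terminals_nonempty : terminals.Nonempty

variable {V : Type} [Fintype V] [DecidableEq V]

/-- Temporal reachability within a set `A` of time edges: `ReachFrom A t u w` holds if
there is a temporal walk from `u` to `w` all of whose labels are `≥ t` and non-decreasing. -/
inductive ReachFrom (A : Finset (TimeEdge V)) : ℕ → V → V → Prop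
  | refl (t : ℕ) (v : V) : ReachFrom A t v v
  | step {t : ℕ} {u v w : V} (l : ℕ) (hle : t ≤ l) (he : (s(u, v), l) ∈ A)
      (htail : ReachFrom A l v w) : ReachFrom A t u w

/-- `u` reaches `w` via a temporal path in the time-edge set `A`. -/
def Reaches (A : Finset (TimeEdge V)) (u w : V) : Prop := ReachFrom A 0 u w

/-- A strategy profile: each agent buys a finite set of time edges. -/
abbrev Profile (V : Type) := V → Finset (TimeEdge V)

/-- The set of time edges of the created graph `G(s)`. -/
def built (s : Profile V) : Finset (TimeEdge V) := Finset.univ.biUnion s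

/-- The two edge-buying settings. -/
inductive Setting | loc | glob
deriving DecidableEq

/-- The two equilibrium types. -/
inductive EqType | nash | greedy
deriving DecidableEq

/-- A time edge of the host graph. -/
def HostGraph.ValidTimeEdge (H : HostGraph V) (p : TimeEdge V) : Prop :=
  p.2 ∈ H.labels p.1

/-- Which strategies are allowed for agent `v` in a given setting: in the local setting all
bought time edges must be incident to `v`; in the global setting there is no restriction. -/
def Allowed (H : HostGraph V) : Setting → V → Finset (TimeEdge V) → Prop
  | Setting.loc, v, S => ∀ p ∈ S, H.ValidTimeEdge p ∧ v ∈ p.1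
  | Setting.glob, _, S => ∀ p ∈ S, H.ValidTimeEdge p

open Classical in
/-- The cost of agent `v`: the number of bought time edges plus `C` times the number of
unreached terminals. -/
noncomputable def cost (H : HostGraph V) (C : ℝ) (s : Profile V) (v : V) : ℝ :=
  ((s v).card : ℝ) + C * ((H.terminals.filter fun t => ¬ Reaches (built s) v t).card : ℝ)

/-- The profile obtained from `s` by replacing `v`'s strategy with `S'`. -/
def update (s : Profile V) (v : V) (S' : Finset (TimeEdge V)) : Profile V :=
  fun u => if u = v then S' else s u

/-- `S'` is obtained from `S` by adding or removing a single time edge. -/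
def GreedyDev (S S' : Finset (TimeEdge V)) : Prop :=
  (∃ p, p ∉ S ∧ S' = insert p S) ∨ (∃ p ∈ S, S' = S.erase p)

/-- `s` is an equilibrium (Nash or Greedy) in the given setting: every strategy is allowed, and
no agent has an (allowed, and for Greedy Equilibria single-time-edge) improving response. -/
def IsEquilibrium (H : HostGraph V) (C : ℝ) (st : Setting) (et : EqType) (s : Profile V) :
    Prop :=
  (∀ v, Allowed H st v (s v)) ∧
    ∀ v S', Allowed H st v S' → (et = EqType.greedy → GreedyDev (s v) S') →
      ¬ cost H C (update s v S') v < cost H C s v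

/-- The social cost of a strategy profile. -/
noncomputable def socialCost (H : HostGraph V) (C : ℝ) (s : Profile V) : ℝ :=
  ∑ v, cost H C s v

/-- A social optimum: an allowed strategy profile of minimum social cost. -/
def IsSocialOptimum (H : HostGraph V) (C : ℝ) (st : Setting) (s : Profile V) : Prop :=
  (∀ v, Allowed H st v (s v)) ∧
    ∀ s' : Profile V, (∀ v, Allowed H st v (s' v)) → socialCost H C s ≤ socialCost H C s'

/-- The lifetime of a host graph: its largest time label. -/
def HostGraph.maxLabel (H : HostGraph V) : ℕ :=
  Finset.univ.sup fun p : V × V => (H.labels s(p.1, p.2)).sup id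

/-- The simple graph whose edges are the host edges carrying the maximum label. -/
def maxLabelGraph (H : HostGraph V) : SimpleGraph V where
  Adj u v := u ≠ v ∧ H.maxLabel ∈ H.labels s(u, v)
  symm := by
    constructor
    intro u v h
    exact ⟨Ne.symm h.1, by rw [Sym2.eq_swap]; exact h.2⟩
  loopless := ⟨fun v h => h.1 rfl⟩

/-- The simple graph underlying a set of time edges. -/
def edgesGraph (A : Finset (TimeEdge V)) : SimpleGraph V where
  Adj u v := u ≠ v ∧ ∃ l, (s(u, v), l) ∈ A
  symm := by
    constructor
    rintro u v ⟨h, l, hl⟩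
    exact ⟨Ne.symm h, l, by rw [Sym2.eq_swap]; exact hl⟩
  loopless := ⟨fun v h => h.1 rfl⟩

/-- A terminal spanner: a valid time-edge set in which every node reaches every terminal. -/
def IsTerminalSpanner (H : HostGraph V) (A : Finset (TimeEdge V)) : Prop :=
  (∀ p ∈ A, H.ValidTimeEdge p) ∧ ∀ v : V, ∀ t ∈ H.terminals, Reaches A v t

/-- An inclusion minimal terminal spanner. -/
def IsMinimalTerminalSpanner (H : HostGraph V) (A : Finset (TimeEdge V)) : Prop :=
  IsTerminalSpanner H A ∧ ∀ p ∈ A, ¬ IsTerminalSpanner H (A.erase p)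

/-- A host graph is simple if every (non-loop) edge carries exactly one time label. -/
def HostGraph.Simple (H : HostGraph V) : Prop :=
  ∀ e : Sym2 V, ¬ e.IsDiag → (H.labels e).card = 1


set_option linter.unusedSectionVars false

------------------------------------------------------------------------
-- AUX
------------------------------------------------------------------------

inductive ReachLen (A : Finset (TimeEdge V)) : ℕ → V → V → ℕ → Prop
  | refl (t : ℕ) (v : V) : ReachLen A t v v 0
  | step {t : ℕ} {u v w : V} {n : ℕ} (l : ℕ) (hle : t ≤ l) (he : (s(u, v), l) ∈ A)
      (htail : ReachLen A l v w n) : ReachLen A t u w (n + 1)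

lemma ReachLen.mono_t {A : Finset (TimeEdge V)} {t t' : ℕ} {u w : V} {n : ℕ}
    (h : ReachLen A t u w n) (ht : t' ≤ t) : ReachLen A t' u w n := by
  induction h with
  | refl => exact .refl _ _
  | step l hle he htail ih => exact .step l (le_trans ht hle) he htail

lemma reachFrom_iff_len {A : Finset (TimeEdge V)} {t : ℕ} {u w : V} :
    ReachFrom A t u w ↔ ∃ n, ReachLen A t u w n := by
  constructor
  · intro h
    induction h with
    | refl => exact ⟨0, .refl _ _⟩
    | step l hle he htail ih =>
      obtain ⟨n, hn⟩ := ih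
      exact ⟨n + 1, .step l hle he hn⟩
  · rintro ⟨n, h⟩
    induction h with
    | refl => exact .refl _ _
    | step l hle he htail ih => exact .step l hle he ih

lemma ReachFrom.mono {A B : Finset (TimeEdge V)} (hAB : A ⊆ B) {t : ℕ} {u w : V}
    (h : ReachFrom A t u w) : ReachFrom B t u w := by
  induction h with
  | refl => exact .refl _ _
  | step l hle he htail ih => exact .step l hle (hAB he) ih

lemma ReachLen.cases' {A : Finset (TimeEdge V)} {t : ℕ} {u w : V} {n : ℕ}
    (h : ReachLen A t u w n) :
    (u = w ∧ n = 0) ∨ ∃ l x m, t ≤ l ∧ (s(u, x), l) ∈ A ∧ ReachLen A l x w m ∧ n = m + 1 := by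
  cases h with
  | refl => exact Or.inl ⟨rfl, rfl⟩
  | step l hle he htail => exact Or.inr ⟨l, _, _, hle, he, htail, rfl⟩

noncomputable def dOf (A : Finset (TimeEdge V)) (t0 v : V) : ℕ :=
  sInf {n | ReachLen A 0 v t0 n}

lemma exists_first {A : Finset (TimeEdge V)} {t0 v : V} (hv : v ≠ t0)
    (hr : Reaches A v t0) :
    ∃ p, p ∈ A ∧ ∃ w, p.1 = s(v, w) ∧ dOf A t0 w < dOf A t0 v := by
  have hex : {n | ReachLen A 0 v t0 n}.Nonempty := reachFrom_iff_len.mp hr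
  have hspec : ReachLen A 0 v t0 (dOf A t0 v) := Nat.sInf_mem hex
  rcases hspec.cases' with ⟨rfl, _⟩ | ⟨l, x, m, _, he, htail, hm⟩
  · exact absurd rfl hv
  · have htail0 : ReachLen A 0 x t0 m := htail.mono_t (Nat.zero_le l)
    have hdx : dOf A t0 x ≤ m := Nat.sInf_le htail0
    exact ⟨(s(v, x), l), he, x, rfl, by omega⟩

open Classical in
lemma card_reach_le (A : Finset (TimeEdge V)) (t0 : V) :
    (Finset.univ.filter fun v => Reaches A v t0).card ≤ A.card + 1 := by
  classical
  set R := Finset.univ.filter fun v => Reaches A v t0 with hR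
  have ht0 : t0 ∈ R := by
    simp only [hR, Finset.mem_filter, Finset.mem_univ, true_and]
    exact ReachFrom.refl _ _
  set f : V → TimeEdge V := fun v =>
    if h : ∃ p, p ∈ A ∧ ∃ w, p.1 = s(v, w) ∧ dOf A t0 w < dOf A t0 v
    then h.choose else (s(t0, t0), 0) with hf
  have hspec : ∀ v ∈ R.erase t0,
      f v ∈ A ∧ ∃ w, (f v).1 = s(v, w) ∧ dOf A t0 w < dOf A t0 v := by
    intro v hv
    obtain ⟨hvne, hvR⟩ := Finset.mem_erase.mp hv
    have hvr : Reaches A v t0 := (Finset.mem_filter.mp hvR).2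
    have h := exists_first hvne hvr
    simp only [hf, dif_pos h]
    exact h.choose_spec
  have hcard : (R.erase t0).card ≤ A.card := by
    apply Finset.card_le_card_of_injOn f (fun v hv => (hspec v hv).1)
    intro v1 hv1 v2 hv2 heq
    by_contra hne
    obtain ⟨-, w1, hw1, hd1⟩ := hspec v1 hv1
    obtain ⟨-, w2, hw2, hd2⟩ := hspec v2 hv2
    have hmem : v2 ∈ (f v1).1 := by
      rw [heq, hw2]; exact Sym2.mem_mk_left _ _
    rw [hw1, Sym2.mem_iff] at hmem
    rcases hmem with rfl | rfl
    · exact hne rfl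
    · have hmem' : v1 ∈ (f v2).1 := by
        rw [← heq, hw1]; exact Sym2.mem_mk_left _ _
      rw [hw2, Sym2.mem_iff] at hmem'
      rcases hmem' with rfl | rfl
      · exact hne rfl
      · omega
  have := Finset.card_erase_of_mem ht0
  have hpos : 0 < R.card := Finset.card_pos.mpr ⟨t0, ht0⟩
  omega


/-- In the global setting, every Nash Equilibrium creates at most `k·(n−1)` time
edges, and consequently its social cost is at most `k` times the optimal social cost
(Price of Anarchy at most `k`). -/
theorem PoA_global_NE_upper {V : Type} [Fintype V] [DecidableEq V]
    (H : HostGraph V) (C : ℝ) (hC : 1 < C)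
    (s : Profile V) (hs : IsEquilibrium H C Setting.glob EqType.nash s)
    (sOpt : Profile V) (hOpt : IsSocialOptimum H C Setting.glob sOpt) :
    (built s).card ≤ H.terminals.card * (Fintype.card V - 1) ∧
    socialCost H C s ≤ (H.terminals.card : ℝ) * socialCost H C sOpt := by
  classical
  obtain ⟨hsAllowed, hsNE⟩ := hs
  have hC0 : (0:ℝ) ≤ C := by linarith
  -- direct edges with an arbitrary valid label
  have hlab : ∀ v t : V, v ≠ t → (H.labels s(v, t)).Nonempty := fun v t h =>
    H.labels_nonempty _ (fun hd => h (Sym2.mk_isDiag_iff.mp hd))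
  set dir : V → V → TimeEdge V := fun v t =>
    (s(v, t), if h : v ≠ t then (hlab v t h).choose else 0) with hdir
  have hdirfst : ∀ v t : V, (dir v t).1 = s(v, t) := fun v t => rfl
  have hdirvalid : ∀ v t : V, v ≠ t → H.ValidTimeEdge (dir v t) := by
    intro v t h
    show (dir v t).2 ∈ H.labels (dir v t).1
    rw [hdirfst]
    simp only [hdir, dif_pos h]
    exact (hlab v t h).choose_spec
  have hbuilt_mem : ∀ (s' : Profile V) (v : V) (p : TimeEdge V), p ∈ s' v → p ∈ built s' :=
    fun s' v p hp => Finset.mem_biUnion.mpr ⟨v, Finset.mem_univ v, hp⟩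
  have hupdate_sub : ∀ (v : V) (S' : Finset (TimeEdge V)), s v ⊆ S' →
      built s ⊆ built (update s v S') := by
    intro v S' hsub p hp
    obtain ⟨u, -, hu⟩ := Finset.mem_biUnion.mp hp
    by_cases h : u = v
    · exact hbuilt_mem _ v p (by simp only [update, if_pos rfl]; exact hsub (h ▸ hu))
    · exact hbuilt_mem _ u p (by simpa [update, h] using hu)
  have hdir_step : ∀ (s' : Profile V) (v t : V), dir v t ∈ built s' →
      Reaches (built s') v t := by
    intro s' v t hmem
    exact ReachFrom.step (dir v t).2 (Nat.zero_le _) hmem (ReachFrom.refl _ _)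
  -- STEP A : in the NE everyone reaches every terminal
  have hreach : ∀ v, ∀ t ∈ H.terminals, Reaches (built s) v t := by
    by_contra hcon
    push_neg at hcon
    obtain ⟨v, t0, ht0, hnr⟩ := hcon
    set M := H.terminals.filter fun t => ¬ Reaches (built s) v t with hM
    have ht0M : t0 ∈ M := Finset.mem_filter.mpr ⟨ht0, hnr⟩
    have hMne : ∀ t ∈ M, v ≠ t := by
      intro t ht h
      subst h
      exact (Finset.mem_filter.mp ht).2 (ReachFrom.refl 0 _)
    set S' := s v ∪ M.image (dir v) with hS'
    have hallowed : Allowed H Setting.glob v S' := by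
      intro p hp
      rcases Finset.mem_union.mp hp with hp | hp
      · exact hsAllowed v p hp
      · obtain ⟨t, htM, rfl⟩ := Finset.mem_image.mp hp
        exact hdirvalid v t (hMne t htM)
    have hsub : built s ⊆ built (update s v S') :=
      hupdate_sub v S' Finset.subset_union_left
    have hreach' : ∀ t ∈ H.terminals, Reaches (built (update s v S')) v t := by
      intro t ht
      by_cases h : Reaches (built s) v t
      · exact h.mono hsub
      · refine hdir_step _ v t (hbuilt_mem _ v _ ?_)
        simp only [update, if_pos rfl, hS']
        exact Finset.mem_union_right _ (Finset.mem_image_of_mem _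
          (Finset.mem_filter.mpr ⟨ht, h⟩))
    have hempty : (H.terminals.filter fun t => ¬ Reaches (built (update s v S')) v t) = ∅ :=
      Finset.filter_eq_empty_iff.mpr (fun t ht => not_not_intro (hreach' t ht))
    have hne := not_lt.mp (hsNE v S' hallowed (fun h => nomatch h))
    have hcost_upd : cost H C (update s v S') v ≤ ((s v).card : ℝ) + (M.card : ℝ) := by
      simp only [cost, update, if_pos rfl, hempty, Finset.card_empty, Nat.cast_zero,
        mul_zero, add_zero]
      have h1 : S'.card ≤ (s v).card + M.card :=
        le_trans (Finset.card_union_le _ _) (by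
          have := Finset.card_image_le (s := M) (f := dir v); omega)
      exact_mod_cast h1
    have hcost_s : cost H C s v = ((s v).card : ℝ) + C * (M.card : ℝ) := rfl
    have hM1 : 1 ≤ M.card := Finset.card_pos.mpr ⟨t0, ht0M⟩
    have hM1' : (1:ℝ) ≤ (M.card : ℝ) := by exact_mod_cast hM1
    rw [hcost_s] at hne
    nlinarith [le_trans hne hcost_upd]
  -- STEP B : per-agent bound on the number of bought edges
  have hagent : ∀ v : V, ((s v).card : ℝ) ≤ ((H.terminals.erase v).card : ℝ) := by
    intro v
    set S' := (H.terminals.erase v).image (dir v) with hS'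
    have hallowed : Allowed H Setting.glob v S' := by
      intro p hp
      obtain ⟨t, htM, rfl⟩ := Finset.mem_image.mp hp
      exact hdirvalid v t (Ne.symm (Finset.mem_erase.mp htM).1)
    have hreach' : ∀ t ∈ H.terminals, Reaches (built (update s v S')) v t := by
      intro t ht
      by_cases h : t = v
      · subst h; exact ReachFrom.refl _ _
      · refine hdir_step _ v t (hbuilt_mem _ v _ ?_)
        simp only [update, if_pos rfl, hS']
        exact Finset.mem_image_of_mem _ (Finset.mem_erase.mpr ⟨h, ht⟩)
    have hempty : (H.terminals.filter fun t => ¬ Reaches (built (update s v S')) v t) = ∅ :=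
      Finset.filter_eq_empty_iff.mpr (fun t ht => not_not_intro (hreach' t ht))
    have hne := not_lt.mp (hsNE v S' hallowed (fun h => nomatch h))
    have hcost_upd : cost H C (update s v S') v ≤ ((H.terminals.erase v).card : ℝ) := by
      simp only [cost, update, if_pos rfl, hempty, Finset.card_empty, Nat.cast_zero,
        mul_zero, add_zero]
      exact_mod_cast Finset.card_image_le
    have hcost_s : ((s v).card : ℝ) ≤ cost H C s v := by
      simp only [cost]
      have : (0:ℝ) ≤ C * ((H.terminals.filter fun t => ¬ Reaches (built s) v t).card : ℝ) :=
        mul_nonneg hC0 (Nat.cast_nonneg _)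
      linarith
    linarith [le_trans hne hcost_upd]
  -- counting the erased-terminal cards
  have hkey : ∀ v : V, (H.terminals.erase v).card + (if v ∈ H.terminals then 1 else 0)
      = H.terminals.card := by
    intro v
    by_cases h : v ∈ H.terminals
    · rw [if_pos h, Finset.card_erase_of_mem h]
      have := Finset.card_pos.mpr ⟨v, h⟩
      omega
    · rw [if_neg h, Finset.erase_eq_of_notMem h, Nat.add_zero]
  have hsum_erase : ∑ v : V, (H.terminals.erase v).card
      = Fintype.card V * H.terminals.card - H.terminals.card := by
    have h1 : ∑ v : V, ((H.terminals.erase v).card + (if v ∈ H.terminals then 1 else 0))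
        = Fintype.card V * H.terminals.card := by
      rw [Finset.sum_congr rfl (fun v _ => hkey v)]
      simp [Finset.sum_const, Finset.card_univ, mul_comm]
    have h2 : ∑ v : V, (if v ∈ H.terminals then 1 else 0) = H.terminals.card := by
      simp [Finset.sum_ite_mem, Finset.univ_inter]
    rw [Finset.sum_add_distrib, h2] at h1
    omega
  obtain ⟨t0, ht0⟩ := H.terminals_nonempty
  have hn1 : 1 ≤ Fintype.card V := Fintype.card_pos_iff.mpr ⟨t0⟩
  have hkn : Fintype.card V * H.terminals.card - H.terminals.card
      = H.terminals.card * (Fintype.card V - 1) := by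
    rw [Nat.mul_sub_one, Nat.mul_comm]
  -- PART 1
  have hagentN : ∀ v : V, (s v).card ≤ (H.terminals.erase v).card := by
    intro v; exact_mod_cast hagent v
  have hpart1 : (built s).card ≤ H.terminals.card * (Fintype.card V - 1) := by
    calc (built s).card ≤ ∑ v : V, (s v).card := Finset.card_biUnion_le
      _ ≤ ∑ v : V, (H.terminals.erase v).card := Finset.sum_le_sum fun v _ => hagentN v
      _ = H.terminals.card * (Fintype.card V - 1) := by rw [hsum_erase, hkn]
  refine ⟨hpart1, ?_⟩
  -- PART 2
  set n := Fintype.card V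
  set k := H.terminals.card
  have hSCs : socialCost H C s ≤ (k : ℝ) * ((n : ℝ) - 1) := by
    have h1 : socialCost H C s = ∑ v : V, ((s v).card : ℝ) := by
      refine Finset.sum_congr rfl fun v _ => ?_
      have hem : (H.terminals.filter fun t => ¬ Reaches (built s) v t) = ∅ :=
        Finset.filter_eq_empty_iff.mpr (fun t ht => not_not_intro (hreach v t ht))
      simp only [cost, hem, Finset.card_empty, Nat.cast_zero, mul_zero, add_zero]
    have h2 : ∑ v : V, ((s v).card : ℝ) ≤ ((∑ v : V, (H.terminals.erase v).card : ℕ) : ℝ) := by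
      push_cast
      exact Finset.sum_le_sum fun v _ => hagent v
    have h3 : ((∑ v : V, (H.terminals.erase v).card : ℕ) : ℝ) = (k:ℝ) * ((n:ℝ) - 1) := by
      rw [hsum_erase, hkn, Nat.cast_mul, Nat.cast_sub hn1]
      norm_num
    rw [h1]; rw [h3] at h2; exact h2
  -- lower bound on the optimum
  have hOptLB : (n : ℝ) - 1 ≤ socialCost H C sOpt := by
    set A := built sOpt with hA
    set R := Finset.univ.filter fun v => Reaches A v t0 with hRdef
    have hRA : R.card ≤ A.card + 1 := card_reach_le A t0
    have hAcard : A.card ≤ ∑ v : V, (sOpt v).card := Finset.card_biUnion_le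
    have hRn : R.card ≤ n := le_trans (Finset.card_filter_le _ _) (by simp [n])
    have hpt : ∀ v : V, ((sOpt v).card : ℝ)
        + C * (if Reaches A v t0 then 0 else 1) ≤ cost H C sOpt v := by
      intro v
      simp only [cost]
      by_cases h : Reaches A v t0
      · rw [if_pos h, mul_zero, add_zero]
        have : (0:ℝ) ≤ C * ((H.terminals.filter fun t => ¬ Reaches (built sOpt) v t).card : ℝ) :=
          mul_nonneg hC0 (Nat.cast_nonneg _)
        linarith
      · rw [if_neg h, mul_one]
        have hmem : t0 ∈ H.terminals.filter fun t => ¬ Reaches (built sOpt) v t :=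
          Finset.mem_filter.mpr ⟨ht0, h⟩
        have h1 : 1 ≤ (H.terminals.filter fun t => ¬ Reaches (built sOpt) v t).card :=
          Finset.card_pos.mpr ⟨t0, hmem⟩
        have h1' : (1:ℝ) ≤ ((H.terminals.filter fun t => ¬ Reaches (built sOpt) v t).card : ℝ) := by
          exact_mod_cast h1
        nlinarith
    have hsum1 : ∑ v : V, (((sOpt v).card : ℝ) + C * (if Reaches A v t0 then 0 else 1))
        ≤ socialCost H C sOpt := Finset.sum_le_sum fun v _ => hpt v
    have hsum2 : ∑ v : V, (if Reaches A v t0 then (0:ℝ) else 1) = (n : ℝ) - (R.card : ℝ) := by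
      have : ∀ v : V, (if Reaches A v t0 then (0:ℝ) else 1)
          = 1 - (if Reaches A v t0 then (1:ℝ) else 0) := by
        intro v; by_cases h : Reaches A v t0 <;> simp [h]
      rw [Finset.sum_congr rfl fun v _ => this v, Finset.sum_sub_distrib]
      rw [Finset.sum_boole]
      simp [hRdef, n, Finset.card_univ]
    rw [Finset.sum_add_distrib, ← Finset.mul_sum] at hsum1
    rw [hsum2] at hsum1
    have hc1 : ((∑ v : V, (sOpt v).card : ℕ) : ℝ) = ∑ v : V, ((sOpt v).card : ℝ) := by push_cast; rfl
    have hb1 : ((R.card : ℝ)) - 1 ≤ ∑ v : V, ((sOpt v).card : ℝ) := by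
      rw [← hc1]
      have : (R.card : ℝ) ≤ ((∑ v : V, (sOpt v).card : ℕ) : ℝ) + 1 := by
        exact_mod_cast le_trans hRA (by omega)
      linarith
    have hb2 : (0:ℝ) ≤ (n:ℝ) - (R.card:ℝ) := by
      have : (R.card : ℝ) ≤ (n : ℝ) := by exact_mod_cast hRn
      linarith
    nlinarith [mul_nonneg (by linarith : (0:ℝ) ≤ C - 1) hb2]
  have hk0 : (0:ℝ) ≤ (k:ℝ) := Nat.cast_nonneg _
  calc socialCost H C s ≤ (k:ℝ) * ((n:ℝ) - 1) := hSCs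
    _ ≤ (k:ℝ) * socialCost H C sOpt := mul_le_mul_of_nonneg_left hOptLB hk0


end TNCG
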